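/- arXiv:2402.08637 — 3 statements merged into one kernel-verified Lean document; each statement's English description precedes it below -/
import Mathlib

section
/- Coupling lemma for conditional marginals: let C and N be finite sets, p : C → [0,1] a probability vector, and β, β̂ two probability distributions on the set of functions [N]^C with conditional marginals β(j,c) = Σ_{f : f(c)=j} β(f) and β̂(j,c) defined analogously. Then there exists a probability distribution ρ on [N]^C with the same conditional marginals as β (i.e., ρ(j,c) = β(j,c) for all j, c) such that Σ_f |ρ(f) − β̂(f)| ≤ 2·Σ_{j∈N} Σ_{c∈C} |β(j,c) − β̂(j,c)|. -/
/-!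
Fix the coordinates one at a time, starting from `βh`. To give coordinate `c` the target
marginal `ν` when the current one is `m`, resample `f c` through a Markov kernel on `N` that
keeps everything below `ν` in place and moves only the excess `(m - ν)⁺` onto the deficits
`(m - ν)⁻`. Mass moves only along coordinate `c`, so the other marginals do not change, and
the `ℓ¹` cost of the step is `2 ∑ (m - ν)⁺ = ∑ |m - ν|`. Summing over coordinates gives the
bound even without the factor `2`.
-/

open Finset Function

lemma mul_posPart_sub_div_self {a b : ℝ} (hb : 0 ≤ b) : a * ((a - b)⁺ / a) = (a - b)⁺ :=
  mul_div_cancel_of_imp' fun ha => posPart_eq_zero.2 (by linarith)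

section Transport

variable {α : Type*} [Fintype α] {m ν : α → ℝ}

lemma sum_posPart_sub_eq_sum_negPart_sub (hsum : ∑ x, m x = ∑ x, ν x) :
    ∑ x, (m x - ν x)⁺ = ∑ x, (m x - ν x)⁻ := by
  have : ∑ x, ((m x - ν x)⁺ - (m x - ν x)⁻) = 0 := by
    simp only [posPart_sub_negPart, sum_sub_distrib, hsum, sub_self]
  rwa [sum_sub_distrib, sub_eq_zero] at this

lemma sum_negPart_sub_mul_div (a : α) :
    (∑ b, (m b - ν b)⁻) * ((m a - ν a)⁻ / ∑ b, (m b - ν b)⁻) = (m a - ν a)⁻ :=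
  mul_div_cancel_of_imp' fun h =>
    (sum_eq_zero_iff_of_nonneg fun _ _ => negPart_nonneg _).1 h a (mem_univ a)

lemma posPart_sub_div_mul_sum_negPart_sub_div (hsum : ∑ x, m x = ∑ x, ν x) (x : α) :
    (m x - ν x)⁺ / m x * ∑ a, (m a - ν a)⁻ / ∑ b, (m b - ν b)⁻ = (m x - ν x)⁺ / m x := by
  by_cases hT : ∑ b, (m b - ν b)⁻ = 0
  · rw [← sum_posPart_sub_eq_sum_negPart_sub hsum] at hT
    simp [(sum_eq_zero_iff_of_nonneg fun _ _ => posPart_nonneg _).1 hT x (mem_univ x)]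
  · rw [← sum_div, div_self hT, mul_one]

variable [DecidableEq α]

/-- From `x` a fraction `(m x - ν x)⁺ / m x` of the mass leaves and is spread proportionally
to the deficits. The junk values of the two divisions occur only where their numerators
vanish as well. -/
noncomputable def transportKernel (m ν : α → ℝ) (x a : α) : ℝ :=
  (if x = a then 1 else 0) + (m x - ν x)⁺ / m x *
    ((m a - ν a)⁻ / ∑ b, (m b - ν b)⁻ - if x = a then 1 else 0)

lemma transportKernel_nonneg (hm : ∀ x, 0 ≤ m x) (hν : ∀ x, 0 ≤ ν x) (x a : α) :
    0 ≤ transportKernel m ν x a := by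
  have hq₀ : 0 ≤ (m x - ν x)⁺ / m x := div_nonneg (posPart_nonneg _) (hm x)
  have hq₁ : (m x - ν x)⁺ / m x ≤ 1 :=
    div_le_one_of_le₀ (sup_le (by linarith [hν x]) (hm x)) (hm x)
  have hr : 0 ≤ (m a - ν a)⁻ / ∑ b, (m b - ν b)⁻ :=
    div_nonneg (negPart_nonneg _) (sum_nonneg fun _ _ => negPart_nonneg _)
  unfold transportKernel
  split_ifs <;> nlinarith

lemma sum_transportKernel (hsum : ∑ x, m x = ∑ x, ν x) (x : α) :
    ∑ a, transportKernel m ν x a = 1 := by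
  simp only [transportKernel, sum_add_distrib, ← mul_sum, sum_sub_distrib, sum_ite_eq,
    mem_univ, if_true, mul_sub, posPart_sub_div_mul_sum_negPart_sub_div hsum]
  ring

lemma sum_transportKernel_mul (hν : ∀ x, 0 ≤ ν x) (hsum : ∑ x, m x = ∑ x, ν x) (a : α) :
    ∑ x, transportKernel m ν x a * m x = ν a := by
  -- the left side is `m a - (m a - ν a)⁺ + (m a - ν a)⁻`
  simp only [transportKernel, mul_comm _ (m _), mul_add, ← mul_assoc,
    mul_posPart_sub_div_self (hν _), sum_add_distrib, mul_sub, sum_sub_distrib, mul_ite,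
    mul_one, mul_zero, sum_ite_eq', mem_univ, if_true, ← sum_mul,
    sum_posPart_sub_eq_sum_negPart_sub hsum, sum_negPart_sub_mul_div]
  linarith [posPart_sub_negPart (m a - ν a)]

lemma sum_abs_transportKernel_sub_mul_le (hm : ∀ x, 0 ≤ m x) (hν : ∀ x, 0 ≤ ν x)
    (hsum : ∑ x, m x = ∑ x, ν x) (x : α) :
    (∑ a, |transportKernel m ν x a - if x = a then 1 else 0|) * m x ≤ 2 * (m x - ν x)⁺ := by
  rw [mul_comm]
  have hq : 0 ≤ (m x - ν x)⁺ / m x := div_nonneg (posPart_nonneg _) (hm x)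
  have hr : ∀ a, 0 ≤ (m a - ν a)⁻ / ∑ b, (m b - ν b)⁻ := fun a =>
    div_nonneg (negPart_nonneg _) (sum_nonneg fun _ _ => negPart_nonneg _)
  calc m x * ∑ a, |transportKernel m ν x a - if x = a then 1 else 0|
      = m x * ((m x - ν x)⁺ / m x) *
          ∑ a, |(m a - ν a)⁻ / ∑ b, (m b - ν b)⁻ - if x = a then 1 else 0| := by
        simp only [transportKernel, add_sub_cancel_left, abs_mul, abs_of_nonneg hq, ← mul_sum,
          mul_assoc]
    _ ≤ m x * ((m x - ν x)⁺ / m x) *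
          ∑ a, ((m a - ν a)⁻ / ∑ b, (m b - ν b)⁻ + if x = a then 1 else 0) := by
        gcongr with a
        · exact mul_nonneg (hm x) hq
        · exact (abs_sub _ _).trans (by rw [abs_of_nonneg (hr a)]; split_ifs <;> simp)
    _ = 2 * (m x - ν x)⁺ := by
        rw [sum_add_distrib, mul_add, mul_assoc, posPart_sub_div_mul_sum_negPart_sub_div hsum,
          sum_ite_eq]
        simp only [mem_univ, if_true, mul_one, mul_posPart_sub_div_self (hν x)]
        ring

lemma sum_sum_abs_transportKernel_sub_mul_le (hm : ∀ x, 0 ≤ m x) (hν : ∀ x, 0 ≤ ν x)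
    (hsum : ∑ x, m x = ∑ x, ν x) :
    ∑ x, (∑ a, |transportKernel m ν x a - if x = a then 1 else 0|) * m x ≤
      ∑ x, |m x - ν x| :=
  calc _ ≤ ∑ x, 2 * (m x - ν x)⁺ :=
        sum_le_sum fun x _ => sum_abs_transportKernel_sub_mul_le hm hν hsum x
    _ = ∑ x, ((m x - ν x)⁺ + (m x - ν x)⁻) := by
        rw [← mul_sum, two_mul, sum_add_distrib, sum_posPart_sub_eq_sum_negPart_sub hsum]
    _ = ∑ x, |m x - ν x| := by simp only [posPart_add_negPart]

end Transport

section Resample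

variable {C N : Type*} [DecidableEq C] [Fintype N]

/-- The law of `g` after `g c` is redrawn from `K (g c) ·`. -/
noncomputable def resample (c : C) (K : N → N → ℝ) (μ : (C → N) → ℝ) (g : C → N) : ℝ :=
  ∑ x, K x (g c) * μ (update g c x)

variable {K : N → N → ℝ} {μ : (C → N) → ℝ}

lemma resample_nonneg (hK : ∀ x a, 0 ≤ K x a) (hμ : ∀ f, 0 ≤ μ f) (c : C) (g : C → N) :
    0 ≤ resample c K μ g :=
  sum_nonneg fun _ _ => mul_nonneg (hK _ _) (hμ _)

variable [Fintype C]

lemma sum_sum_update {M : Type*} [AddCommMonoid M] (c : C) (Φ : (C → N) → N → M) :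
    ∑ g, ∑ x, Φ (update g c x) (g c) = ∑ f, ∑ a, Φ f a := by
  let e : Equiv.Perm ((C → N) × N) :=
    Involutive.toPerm (fun p : (C → N) × N => (update p.1 c p.2, p.1 c)) fun p => by simp
  rw [← Fintype.sum_prod_type', ← Fintype.sum_prod_type']
  exact Equiv.sum_comp e fun p : (C → N) × N => Φ p.1 p.2

lemma sum_resample (hK : ∀ x, ∑ a, K x a = 1) (c : C) :
    ∑ g, resample c K μ g = ∑ f, μ f := by
  have := sum_sum_update c fun f a => K (f c) a * μ f
  simp only [update_self] at this
  simp only [resample, this, ← sum_mul, hK, one_mul]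

variable [DecidableEq N]

/-- The paper's `μ(j, c)`. -/
noncomputable def marginal (μ : (C → N) → ℝ) (c : C) (j : N) : ℝ :=
  ∑ f ∈ univ.filter (fun f : C → N => f c = j), μ f

lemma marginal_nonneg (hμ : ∀ f, 0 ≤ μ f) (c : C) (j : N) : 0 ≤ marginal μ c j :=
  sum_nonneg fun f _ => hμ f

lemma sum_marginal (μ : (C → N) → ℝ) (c : C) : ∑ j, marginal μ c j = ∑ f, μ f :=
  sum_fiberwise _ _ _

lemma sum_apply_mul_eq_sum_mul_marginal (μ : (C → N) → ℝ) (c : C) (φ : N → ℝ) :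
    ∑ f, φ (f c) * μ f = ∑ j, φ j * marginal μ c j := by
  rw [← sum_fiberwise univ (fun f : C → N => f c)]
  refine sum_congr rfl fun j _ => ?_
  rw [marginal, mul_sum]
  exact sum_congr rfl fun f hf => by rw [(mem_filter.1 hf).2]

lemma marginal_resample_self (c : C) (a : N) :
    marginal (resample c K μ) c a = ∑ x, K x a * marginal μ c x := by
  have := sum_sum_update c fun f b => if b = a then K (f c) b * μ f else 0
  simp only [update_self, sum_ite_eq', mem_univ, if_true] at this
  rw [← sum_apply_mul_eq_sum_mul_marginal, marginal, sum_filter]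
  simpa [resample] using this

lemma marginal_resample_of_ne (hK : ∀ x, ∑ a, K x a = 1) {c c' : C} (h : c' ≠ c) (k : N) :
    marginal (resample c K μ) c' k = marginal μ c' k := by
  have := sum_sum_update c fun f b => if f c' = k then K (f c) b * μ f else 0
  simp only [update_self, update_of_ne h] at this
  simpa [resample, marginal, sum_filter, ← sum_mul, hK] using this

lemma sum_abs_resample_sub_le (hμ : ∀ f, 0 ≤ μ f) (c : C) :
    ∑ g, |resample c K μ g - μ g| ≤
      ∑ x, (∑ a, |K x a - if x = a then 1 else 0|) * marginal μ c x := by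
  have hsub : ∀ g, resample c K μ g - μ g =
      ∑ x, (K x (g c) - if x = g c then 1 else 0) * μ (update g c x) := fun g => by
    simp [resample, sub_mul, sum_sub_distrib]
  have := sum_sum_update c fun f b => |K (f c) b - if f c = b then 1 else 0| * μ f
  simp only [update_self] at this
  calc ∑ g, |resample c K μ g - μ g|
      ≤ ∑ g, ∑ x, |K x (g c) - if x = g c then 1 else 0| * μ (update g c x) := by
        gcongr with g
        rw [hsub]
        exact (abs_sum_le_sum_abs _ _).trans_eq
          (sum_congr rfl fun x _ => by rw [abs_mul, abs_of_nonneg (hμ _)])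
    _ = _ := by rw [this, ← sum_apply_mul_eq_sum_mul_marginal]; simp [sum_mul]

end Resample

section Coupling

variable {C N : Type*} [Fintype C] [DecidableEq C] [Fintype N] [DecidableEq N]
  {β βh : (C → N) → ℝ}

lemma exists_marginal_eq_on (hβ : ∀ f, 0 ≤ β f) (hβh : ∀ f, 0 ≤ βh f)
    (hsum : ∑ f, β f = ∑ f, βh f) (S : Finset C) :
    ∃ ρ : (C → N) → ℝ, (∀ f, 0 ≤ ρ f) ∧ ∑ f, ρ f = ∑ f, βh f ∧
      (∀ c ∈ S, marginal ρ c = marginal β c) ∧ (∀ c ∉ S, marginal ρ c = marginal βh c) ∧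
      ∑ f, |ρ f - βh f| ≤ ∑ c ∈ S, ∑ j, |marginal β c j - marginal βh c j| := by
  induction S using Finset.induction with
  | empty => exact ⟨βh, hβh, rfl, by simp, fun _ _ => rfl, by simp⟩
  | @insert c S hc ih =>
    obtain ⟨ρ, hρ, hρsum, hin, hout, hdist⟩ := ih
    have hmass : ∑ j, marginal ρ c j = ∑ j, marginal β c j := by
      rw [sum_marginal, sum_marginal, hρsum, hsum]
    set K := transportKernel (marginal ρ c) (marginal β c)
    have hK : ∀ x, ∑ a, K x a = 1 := sum_transportKernel hmass
    refine ⟨resample c K ρ, resample_nonneg (transportKernel_nonneg (marginal_nonneg hρ c)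
      (marginal_nonneg hβ c)) hρ c, (sum_resample hK c).trans hρsum, ?_, ?_, ?_⟩
    · intro c' hc'
      rcases mem_insert.1 hc' with rfl | hc'
      · funext a
        rw [marginal_resample_self]
        exact sum_transportKernel_mul (marginal_nonneg hβ c') hmass a
      · rw [← hin c' hc']
        exact funext (marginal_resample_of_ne hK (ne_of_mem_of_not_mem hc' hc))
    · intro c' hc'
      rw [← hout c' fun h => hc' (mem_insert_of_mem h)]
      exact funext (marginal_resample_of_ne hK fun h => hc' (h ▸ mem_insert_self c S))
    · calc ∑ f, |resample c K ρ f - βh f|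
          ≤ ∑ f, (|resample c K ρ f - ρ f| + |ρ f - βh f|) :=
            sum_le_sum fun f _ => abs_sub_le _ _ _
        _ ≤ ∑ j, |marginal ρ c j - marginal β c j| + ∑ f, |ρ f - βh f| := by
            rw [sum_add_distrib]
            gcongr
            exact (sum_abs_resample_sub_le hρ c).trans (sum_sum_abs_transportKernel_sub_mul_le
              (marginal_nonneg hρ c) (marginal_nonneg hβ c) hmass)
        _ ≤ ∑ c' ∈ insert c S, ∑ j, |marginal β c' j - marginal βh c' j| := by
            rw [sum_insert hc, hout c hc]
            simp_rw [abs_sub_comm (marginal βh c _)]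
            gcongr

end Coupling

theorem coupling_for_conditional_marginals_general
    {C N : Type*} [Fintype C] [DecidableEq C] [Fintype N] [DecidableEq N]
    (β : (C → N) → ℝ) (hβ0 : ∀ f, 0 ≤ β f) (hβ1 : ∑ f, β f = 1)
    (βh : (C → N) → ℝ) (hβh0 : ∀ f, 0 ≤ βh f) (hβh1 : ∑ f, βh f = 1) :
    ∃ ρ : (C → N) → ℝ,
      (∀ f, 0 ≤ ρ f) ∧ (∑ f, ρ f = 1) ∧
      (∀ (j : N) (c : C),
        ∑ f ∈ Finset.univ.filter (fun f : C → N => f c = j), ρ f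
          = ∑ f ∈ Finset.univ.filter (fun f : C → N => f c = j), β f) ∧
      (∑ f, |ρ f - βh f|)
        ≤ 2 * ∑ j : N, ∑ c : C,
            |(∑ f ∈ Finset.univ.filter (fun f : C → N => f c = j), β f)
              - ∑ f ∈ Finset.univ.filter (fun f : C → N => f c = j), βh f| := by
  obtain ⟨ρ, hρ, hρsum, hmarg, -, hdist⟩ :=
    exists_marginal_eq_on hβ0 hβh0 (hβ1.trans hβh1.symm) univ
  refine ⟨ρ, hρ, hρsum.trans hβh1, fun j c => congrFun (hmarg c (mem_univ c)) j, ?_⟩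
  calc ∑ f, |ρ f - βh f|
      ≤ ∑ c, ∑ j, |marginal β c j - marginal βh c j| := hdist
    _ = ∑ j, ∑ c, |marginal β c j - marginal βh c j| := sum_comm
    _ ≤ 2 * ∑ j, ∑ c, |marginal β c j - marginal βh c j| :=
        le_mul_of_one_le_left (by positivity) one_le_two

/-- Coupling lemma for conditional marginals: given two distributions `β`, `βh`
on pure strategies `C → N`, there is a distribution `ρ` with the same
conditional marginals as `β` whose total-variation-type distance to `βh` is at
most twice the ℓ1 distance between the marginals of `β` and `βh`. -/
theorem coupling_for_conditional_marginals
    {C N : Type*} [Fintype C] [DecidableEq C] [Fintype N] [DecidableEq N]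
    [Nonempty C] [Nonempty N]
    (β : (C → N) → ℝ) (hβ0 : ∀ f, 0 ≤ β f) (hβ1 : ∑ f, β f = 1)
    (βh : (C → N) → ℝ) (hβh0 : ∀ f, 0 ≤ βh f) (hβh1 : ∑ f, βh f = 1) :
    ∃ ρ : (C → N) → ℝ,
      (∀ f, 0 ≤ ρ f) ∧ (∑ f, ρ f = 1) ∧
      (∀ (j : N) (c : C),
        ∑ f ∈ Finset.univ.filter (fun f : C → N => f c = j), ρ f
          = ∑ f ∈ Finset.univ.filter (fun f : C → N => f c = j), β f) ∧
      (∑ f, |ρ f - βh f|)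
        ≤ 2 * ∑ j : N, ∑ c : C,
            |(∑ f ∈ Finset.univ.filter (fun f : C → N => f c = j), β f)
              - ∑ f ∈ Finset.univ.filter (fun f : C → N => f c = j), βh f| :=
  coupling_for_conditional_marginals_general β hβ0 hβ1 βh hβh0 hβh1
end

section
/- Zero swap regret of Stackelberg-mixture play: let J be a finite set of pairs (α, f) where α is a probability distribution on a finite set A and f ∈ F is a best response to α, i.e., Σ_{a∈A} α(a)·u_L(a, f) ≥ Σ_{a∈A} α(a)·u_L(a, g) for all g ∈ F. Let D be any probability distribution on J, and for each a ∈ A and f ∈ F define w(a, f) := Σ_{(α,g)∈J, g=f} D(α,g)·α(a). Then for every swap map π : F → F, Σ_{a∈A} Σ_{f∈F} w(a,f)·u_L(a, f) ≥ Σ_{a∈A} Σ_{f∈F} w(a,f)·u_L(a, π(f)). -/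
/-!
Regrouping the weighted play by the pair `(α, f)` it comes from, the utility of any swap map `π`
becomes `Σ_p D p · 𝔼_{a∼α} u_L(a, π f)`; each summand is at most `D p · 𝔼_{a∼α} u_L(a, f)`
because `f` is a best response to `α`.
-/

open Finset

section MixturePlay

variable {A F R : Type*} [Fintype A] [Fintype F] [DecidableEq F] [CommSemiring R]

/-- The weight `w(a, f)` of the induced play. -/
def mixturePlay (J : Finset ((A → R) × F)) (D : (A → R) × F → R) (a : A) (f : F) : R :=
  ∑ p ∈ J with p.2 = f, D p * p.1 a

theorem sum_mixturePlay_mul_comp (J : Finset ((A → R) × F)) (D : (A → R) × F → R)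
    (u : A → F → R) (φ : F → F) :
    ∑ a, ∑ f, mixturePlay J D a f * u a (φ f) = ∑ p ∈ J, D p * ∑ a, p.1 a * u a (φ p.2) := by
  have fiber (a : A) (f : F) : mixturePlay J D a f * u a (φ f)
      = ∑ p ∈ J with p.2 = f, D p * (p.1 a * u a (φ p.2)) := by
    rw [mixturePlay, sum_mul]
    refine sum_congr rfl fun p hp => ?_
    rw [(mem_filter.mp hp).2, mul_assoc]
  simp only [fiber, sum_fiberwise]
  rw [sum_comm]
  simp only [← mul_sum]

end MixturePlay

theorem stackelberg_mixture_no_swap_regret_general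
    {A F : Type*} [Fintype A] [Fintype F] [DecidableEq F]
    (uL : A → F → ℝ)
    (J : Finset ((A → ℝ) × F))
    (hbr : ∀ p ∈ J, ∀ g : F, (∑ a, p.1 a * uL a g) ≤ ∑ a, p.1 a * uL a p.2)
    (D : ((A → ℝ) × F) → ℝ) (hD0 : ∀ p ∈ J, 0 ≤ D p) :
    ∀ π : F → F,
      (∑ a, ∑ f, (∑ p ∈ J.filter (fun p => p.2 = f), D p * p.1 a) * uL a (π f))
        ≤ ∑ a, ∑ f, (∑ p ∈ J.filter (fun p => p.2 = f), D p * p.1 a) * uL a f := by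
  intro π
  have swapped := sum_mixturePlay_mul_comp J D uL π
  have played := sum_mixturePlay_mul_comp J D uL id
  simp only [mixturePlay, id] at swapped played
  rw [swapped, played]
  exact sum_le_sum fun p hp => mul_le_mul_of_nonneg_left (hbr p hp (π p.2)) (hD0 p hp)

/-- Zero swap regret of Stackelberg-mixture play: let `J` be a finite set of
pairs `(α, f)` where `f` is a best response to the commitment `α`, and let `D`
be a distribution over `J`.  The induced weighted play
`w(a,f) = Σ_{(α,g)∈J, g=f} D(α,g)·α(a)` has no swap regret: no swap map
`π : F → F` improves the total utility. -/
theorem stackelberg_mixture_no_swap_regret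
    {A F : Type*} [Fintype A] [Fintype F] [DecidableEq F]
    (uL : A → F → ℝ)
    (J : Finset ((A → ℝ) × F))
    (hbr : ∀ p ∈ J, ∀ g : F, (∑ a, p.1 a * uL a g) ≤ ∑ a, p.1 a * uL a p.2)
    (D : ((A → ℝ) × F) → ℝ) (hD0 : ∀ p ∈ J, 0 ≤ D p)
    (hD1 : ∑ p ∈ J, D p = 1) :
    ∀ π : F → F,
      (∑ a, ∑ f, (∑ p ∈ J.filter (fun p => p.2 = f), D p * p.1 a) * uL a (π f))
        ≤ ∑ a, ∑ f, (∑ p ∈ J.filter (fun p => p.2 = f), D p * p.1 a) * uL a f :=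
  stackelberg_mixture_no_swap_regret_general uL J hbr D hD0
end

section
/- Approximate best response becomes exact after mixing: let I = {0, ε, …, (N−1)ε} with ε > 0, let v_L ∈ I, and let α be a mixed bid distribution for the optimizer such that the learner's utilities u_L(α, j) (for bids jε, j ∈ {0,…,N−1}) satisfy u_L(α, 0) ≥ u_L(α, j) − δ for all j, where δ ≥ 0. Suppose also that against the zero bid of the optimizer, the learner's utility of bidding jε is v_L − jε (winning at price jε). Let η = 2δ/ε and define α' = η·(point mass at bid 0) + (1−η)·α, assuming η ≤ 1. Then u_L(α', 0) ≥ u_L(α', j) + δ for all j ≥ 1; in particular bid 0 is a strict best response to α'. -/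
/-!
Mixing weight `η` of the zero bid contributes a gap of at least `η · jε ≥ ηε = 2δ` in favour of
bid `0`, while the remaining weight `1 - η` on `α` costs at most `(1 - η) δ ≤ δ`.
-/

theorem le_convex_comb_of_two_mul_le {η g h δ : ℝ} (hη0 : 0 ≤ η) (hη1 : η ≤ 1) (hδ : 0 ≤ δ)
    (hg : 2 * δ ≤ η * g) (hh : -δ ≤ h) : δ ≤ η * g + (1 - η) * h :=
  calc δ = 2 * δ + (1 - η) * -δ - η * δ := by ring
    _ ≤ η * g + (1 - η) * h - 0 := by
      gcongr
      positivity
    _ = η * g + (1 - η) * h := sub_zero _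

/-- Approximate best response becomes exact after mixing: if bid `0` is a
`δ`-approximate best response to `α` (utilities `uα j` for bidding `jε`), and
against the optimizer's zero bid the learner's utility of bidding `jε` is
`v_L − jε`, then mixing probability `η = 2δ/ε` of the zero bid into `α` makes
bid `0` better than every bid `jε`, `j ≥ 1`, by at least `δ`. -/
theorem approx_best_response_to_exact
    (N : ℕ) (ε δ v_L : ℝ) (hε : 0 < ε) (hδ : 0 ≤ δ)
    (uα : ℕ → ℝ)
    (happrox : ∀ j < N, uα 0 ≥ uα j - δ)
    (hη1 : 2 * δ / ε ≤ 1) :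
    ∀ j, 1 ≤ j → j < N →
      (2 * δ / ε) * (v_L - (0 : ℕ) * ε) + (1 - 2 * δ / ε) * uα 0
        ≥ ((2 * δ / ε) * (v_L - (j : ℝ) * ε) + (1 - 2 * δ / ε) * uα j) + δ := by
  intro j hj hjN
  set η := 2 * δ / ε
  have hη0 : 0 ≤ η := by positivity
  have hpure : 2 * δ ≤ η * ((v_L - (0 : ℕ) * ε) - (v_L - j * ε)) :=
    calc 2 * δ = η * (1 * ε) := by rw [one_mul, div_mul_cancel₀ _ hε.ne']
      _ ≤ η * (j * ε) := by gcongr; exact_mod_cast hj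
      _ = η * ((v_L - (0 : ℕ) * ε) - (v_L - j * ε)) := by push_cast; ring
  have hmixed : -δ ≤ uα 0 - uα j := by linarith [happrox j hjN]
  linarith [le_convex_comb_of_two_mul_le hη0 hη1 hδ hpure hmixed]
end
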